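/- arXiv:math/0006154 — 6 statements merged into one kernel-verified Lean document; each statement's English description precedes it below -/
import Mathlib

section
/- Let $V$ be a real vector space with basis $e_1,\ldots,e_n,e^1_1,\ldots,e^s_n$ and define $\omega_j = \sum_{i=1}^n e_i^* \wedge (e^j_i)^*$ for $j=1,\ldots,s$. Then for any multi-index $H=(h_1,\ldots,h_s)$ of non-negative integers with $h_1+\cdots+h_s > n$, the wedge product $\omega_1^{\wedge h_1}\wedge\cdots\wedge \omega_s^{\wedge h_s} = 0$. -/
/-!
Each `e_i ∧ e^j_i` has even degree, so these elements commute with each other and generate a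
commutative subalgebra, in which `ω_j = ∑ i, e_i ∧ e^j_i`. Writing `∏ ω_j ^ h_j` as a product of
`N = ∑ h_j > n` factors `ω` and expanding, every monomial picks an index `i` from each factor;
by pigeonhole two factors pick the same `i`, and `(e_i ∧ e^j_i) ∧ (e_i ∧ e^{j'}_i) = 0`.
-/

noncomputable section

abbrev Idx (n s : ℕ) := Fin n ⊕ (Fin n × Fin s)

abbrev Vns (n s : ℕ) := Idx n s → ℝ

def bV (n s : ℕ) : Module.Basis (Idx n s) ℝ (Vns n s) := Pi.basisFun ℝ _

/-- The polysymplectic 2-forms `ω j = ∑ i, e_i^* ∧ (e^j_i)^*`. -/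
def om (n s : ℕ) (j : Fin s) : ExteriorAlgebra ℝ (Vns n s) :=
  ∑ i : Fin n,
    ExteriorAlgebra.ι ℝ (bV n s (Sum.inl i)) * ExteriorAlgebra.ι ℝ (bV n s (Sum.inr (i, j)))

open Finset

theorem Finset.prod_univ_sum_eq_zero_of_card_lt {R ι κ : Type*} [CommSemiring R] [Fintype ι]
    [Fintype κ] [DecidableEq κ] (f : κ → ι → R) (hf : ∀ p q i, p ≠ q → f p i * f q i = 0)
    (hcard : Fintype.card ι < Fintype.card κ) : ∏ p, ∑ i, f p i = 0 := by
  rw [Finset.prod_univ_sum]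
  refine sum_eq_zero fun g _ => ?_
  obtain ⟨p, q, hpq, hg⟩ := Fintype.exists_ne_map_eq_of_card_lt g hcard
  have hq : q ∈ univ.erase p := mem_erase.2 ⟨hpq.symm, mem_univ q⟩
  rw [← mul_prod_erase _ _ (mem_univ p), ← mul_prod_erase _ _ hq, ← mul_assoc, hg,
    hf p q _ hpq, zero_mul]

theorem Finset.prod_pow_eq_prod_sigma {M ι : Type*} [CommMonoid M] [Fintype ι] (x : ι → M)
    (h : ι → ℕ) : ∏ j, x j ^ h j = ∏ p : Σ j, Fin (h j), x p.1 := by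
  simp [Fintype.prod_sigma]

namespace ExteriorAlgebra

variable {R M : Type*} [CommRing R] [AddCommGroup M] [Module R M]

theorem ι_mul_ι_comm (x y : M) : ι R x * ι R y = -(ι R y * ι R x) :=
  eq_neg_of_add_eq_zero_left (ι_add_mul_swap x y)

theorem commute_ι_mul_ι_ι (x y z : M) : Commute (ι R x * ι R y) (ι R z) := by
  rw [commute_iff_eq, mul_assoc, ι_mul_ι_comm y z, mul_neg, ← mul_assoc, ι_mul_ι_comm x z,
    neg_mul, neg_neg, mul_assoc]

theorem commute_ι_mul_ι (x y z w : M) : Commute (ι R x * ι R y) (ι R z * ι R w) :=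
  (commute_ι_mul_ι_ι x y z).mul_right (commute_ι_mul_ι_ι x y w)

theorem ι_mul_ι_mul_ι_mul_ι_self (x y z : M) : ι R x * ι R y * (ι R x * ι R z) = 0 := by
  rw [← mul_assoc, (commute_ι_mul_ι_ι x y x).eq, ← mul_assoc, ι_sq_zero, zero_mul, zero_mul]

end ExteriorAlgebra

namespace Polysymplectic

open ExteriorAlgebra

variable (n s : ℕ)

def gen (p : Fin n × Fin s) : ExteriorAlgebra ℝ (Vns n s) :=
  ι ℝ (bV n s (Sum.inl p.1)) * ι ℝ (bV n s (Sum.inr p))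

def genAlgebra : Subalgebra ℝ (ExteriorAlgebra ℝ (Vns n s)) :=
  Algebra.adjoin ℝ (Set.range (gen n s))

instance : CommRing (genAlgebra n s) where
  mul_comm := (Algebra.isMulCommutative_adjoin ℝ <| by
    rintro _ ⟨p, rfl⟩ _ ⟨q, rfl⟩
    exact (commute_ι_mul_ι _ _ _ _).eq).is_comm.comm

def genIn (p : Fin n × Fin s) : genAlgebra n s :=
  ⟨gen n s p, Algebra.subset_adjoin ⟨p, rfl⟩⟩

theorem genIn_mul_genIn_eq_zero (i : Fin n) (j j' : Fin s) :
    genIn n s (i, j) * genIn n s (i, j') = 0 :=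
  Subtype.ext (ι_mul_ι_mul_ι_mul_ι_self _ _ _)

def omIn (j : Fin s) : genAlgebra n s := ∑ i, genIn n s (i, j)

theorem coe_omIn (j : Fin s) : (omIn n s j : ExteriorAlgebra ℝ (Vns n s)) = om n s j :=
  AddSubmonoidClass.coe_finsetSum _ _

theorem prod_omIn_pow_eq_zero (h : Fin s → ℕ) (hsum : n < ∑ j, h j) :
    ∏ j, omIn n s j ^ h j = 0 := by
  rw [prod_pow_eq_prod_sigma]
  unfold omIn
  refine prod_univ_sum_eq_zero_of_card_lt (fun (p : Σ j, Fin (h j)) i => genIn n s (i, p.1))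
    (fun _ _ i _ => genIn_mul_genIn_eq_zero n s i _ _) ?_
  simpa using hsum

end Polysymplectic

open Polysymplectic in
theorem stmt0 (n s : ℕ) (h : Fin s → ℕ) (hsum : n < ∑ j, h j) :
    (List.ofFn fun j : Fin s => om n s j ^ h j).prod = 0 := by
  have hval : (fun j => om n s j ^ h j) = (genAlgebra n s).val ∘ fun j => omIn n s j ^ h j := by
    ext1 j
    rw [Function.comp_apply, map_pow, Subalgebra.coe_val, coe_omIn]
  rw [hval, ← List.map_ofFn, ← map_list_prod, List.prod_ofFn, prod_omIn_pow_eq_zero n s h hsum,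
    map_zero]
end
end

section
/- Let $V$ be a real vector space with basis $e_1,\ldots,e_n,e^1_1,\ldots,e^s_n$ and define $\omega_j = \sum_{i=1}^n e_i^* \wedge (e^j_i)^*$ for $j=1,\ldots,s$. Then the forms $\omega_1^{\wedge h_1}\wedge\cdots\wedge \omega_s^{\wedge h_s}$, as $(h_1,\ldots,h_s)$ ranges over all $s$-tuples of non-negative integers with $h_1+\cdots+h_s = n$, are linearly independent in $\bigwedge^{2n} V^*$. -/
/-!
STATEMENT 1: The forms `ω_1^{h_1} ∧ ⋯ ∧ ω_s^{h_s}`, as `(h_1,…,h_s)` ranges over the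
`s`-tuples of non-negative integers with `h_1 + ⋯ + h_s = n`, are linearly independent
(in the exterior algebra of `V = ℝ^{n(s+1)}`, inside degree `2n`).
-/

noncomputable section

/-!
The summands `x i j = e_i ∧ e^j_i` of `ω_j` are of even degree, hence central, and
`x i j * x i j' = 0`. Computing in the (commutative) centre with a word `w : Fin n → Fin s`
whose fibres have sizes `h_j`, this gives `∏ⱼ ω_j ^ h_j = ∏ₖ ω_{w k} = ∑_σ ∏ᵢ x i (w (σ⁻¹ i))`.
The coefficient of `∏ᵢ x i (f i) = e_1 ∧ e^{f 1}_1 ∧ ⋯ ∧ e_n ∧ e^{f n}_n` is a determinant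
functional that singles out `f`, so the `f`-coefficient of `∏ⱼ ω_j ^ h_j` counts the
permutations `σ` with `w ∘ σ⁻¹ = f`: it is nonzero exactly when the fibres of `f` have sizes
`h_j`. The coefficients at the words `w_h` are thus a dual family that is diagonal with nonzero
diagonal entries.
-/

open ExteriorAlgebra

namespace ExteriorAlgebra

variable {R M : Type*} [CommRing R] [AddCommGroup M] [Module R M]

theorem ι_mul_ι_mem_center (a b : M) :
    ι R a * ι R b ∈ Subalgebra.center R (ExteriorAlgebra R M) := by
  have anticomm (x y : M) : ι R x * ι R y = -(ι R y * ι R x) :=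
    eq_neg_of_add_eq_zero_left (ι_add_mul_swap x y)
  rw [Subalgebra.mem_center_iff]
  intro z
  induction z using ExteriorAlgebra.induction with
  | algebraMap r => exact Algebra.commutes r _
  | ι c => rw [← mul_assoc, anticomm c a, neg_mul, mul_assoc, anticomm c b]; noncomm_ring
  | mul x y hx hy => rw [mul_assoc, hy, ← mul_assoc, hx, mul_assoc]
  | add x y hx hy => rw [add_mul, mul_add, hx, hy]

theorem ι_mul_ι_mul_ι_mul_ι_self_s1 (a b c : M) : ι R a * ι R b * (ι R a * ι R c) = 0 := by
  rw [← mul_assoc, ← Subalgebra.mem_center_iff.mp (ι_mul_ι_mem_center a b), ← mul_assoc,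
    ι_sq_zero, zero_mul, zero_mul]

theorem ιMulti_two (v : Fin 2 → M) : ιMulti R 2 v = ι R (v 0) * ι R (v 1) := by
  simp [ιMulti_apply, Matrix.vecTail]

theorem ιMulti_uncurry_finProdFinEquiv {m k : ℕ} (v : Fin m → Fin k → M) :
    ιMulti R (m * k) (Function.uncurry v ∘ finProdFinEquiv.symm) =
      (List.ofFn fun i => ιMulti R k (v i)).prod := by
  rw [ιMulti_apply, List.ofFn_mul, List.prod_flatten, List.map_ofFn]
  congr 1
  refine List.ofFn_inj.mpr (funext fun i => ?_)
  simp only [Function.comp_apply, ιMulti_apply]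
  congr 2
  funext j
  rw [show finProdFinEquiv.symm _ = (i, j) from
    finProdFinEquiv.symm_apply_eq.mpr (Fin.ext (by simp [finProdFinEquiv_apply_val]; ring))]
  rfl

variable {I : Type*} (b : Module.Basis I R M) {m : ℕ}

def detCoord (c : Fin m → I) : ExteriorAlgebra R M →ₗ[R] R :=
  liftAlternating <| Pi.single m <|
    Matrix.detRowAlternating.compLinearMap (LinearMap.pi fun col => b.coord (c col))

theorem detCoord_ιMulti (c : Fin m → I) (v : Fin m → M) :
    detCoord b c (ιMulti R m v) = (Matrix.of fun r col => b.coord (c col) (v r)).det := by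
  rw [detCoord, liftAlternating_apply_ιMulti, Pi.single_eq_same]
  rfl

theorem detCoord_ιMulti_self {c : Fin m → I} (hc : c.Injective) :
    detCoord b c (ιMulti R m (b ∘ c)) = 1 := by
  classical
  rw [detCoord_ιMulti, ← Matrix.det_one (n := Fin m) (R := R)]
  congr 1
  ext r col
  simp [Matrix.one_apply, Finsupp.single_apply, hc.eq_iff]

theorem detCoord_ιMulti_eq_zero {c d : Fin m → I} {r : Fin m} (hr : d r ∉ Set.range c) :
    detCoord b c (ιMulti R m (b ∘ d)) = 0 := by
  classical
  rw [detCoord_ιMulti]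
  refine Matrix.det_eq_zero_of_row_eq_zero r fun col => ?_
  simp only [Matrix.of_apply, Function.comp_apply, Module.Basis.coord_apply, Module.Basis.repr_self]
  exact Finsupp.single_eq_of_ne fun h => hr ⟨col, h⟩

end ExteriorAlgebra

section Combinatorics

variable {α β : Type*} [Fintype α] [DecidableEq β]

theorem exists_card_fiber_eq [Fintype β] (H : β → ℕ) (hH : ∑ j, H j = Fintype.card α) :
    ∃ w : α → β, ∀ j, Fintype.card {a // w a = j} = H j := by
  let e : α ≃ Σ j, Fin (H j) := Fintype.equivOfCardEq (by simp [hH])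
  exact ⟨fun a => (e a).1, fun j => by
    rw [Fintype.card_congr ((e.subtypeEquiv fun _ => Iff.rfl).trans (Equiv.sigmaSubtype j)),
      Fintype.card_fin]⟩

theorem card_fiber_comp_perm (w : α → β) (σ : Equiv.Perm α) (j : β) :
    Fintype.card {a // w (σ a) = j} = Fintype.card {a // w a = j} :=
  Fintype.card_congr (σ.subtypeEquiv fun _ => Iff.rfl)

theorem prod_sum_pow_card_fiber_eq_sum_perm [DecidableEq α] [Fintype β] {A : Type*}
    [CommSemiring A] (x : α → β → A)
    (hx : ∀ i j j', x i j * x i j' = 0) (w : α → β) :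
    ∏ j, (∑ i, x i j) ^ Fintype.card {a // w a = j} =
      ∑ σ : Equiv.Perm α, ∏ i, x i (w (σ.symm i)) := by
  have hvanish (g : α → α) (hg : ¬ g.Injective) : ∏ k, x (g k) (w k) = 0 := by
    obtain ⟨a, b, hab, hne⟩ := Function.not_injective_iff.mp hg
    rw [← Finset.prod_mul_prod_compl {a, b}, Finset.prod_pair hne, hab, hx, zero_mul]
  calc ∏ j, (∑ i, x i j) ^ Fintype.card {a // w a = j}
      = ∏ k, ∑ i, x i (w k) := by
        rw [← Fintype.prod_fiberwise' w fun j => ∑ i, x i j]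
        simp only [Finset.prod_const, Finset.card_univ]
    _ = ∑ g : α → α, ∏ k, x (g k) (w k) := Fintype.prod_sum _
    _ = ∑ σ : Equiv.Perm α, ∏ k, x (σ k) (w k) := by
        refine (Fintype.sum_of_injective (fun σ : Equiv.Perm α => ⇑σ) DFunLike.coe_injective _ _
          (fun g hg => hvanish g fun hinj => hg ?_) fun _ => rfl).symm
        exact ⟨Equiv.ofBijective g hinj.bijective_of_finite, rfl⟩
    _ = ∑ σ : Equiv.Perm α, ∏ i, x i (w (σ.symm i)) := by
        refine Fintype.sum_congr _ _ fun σ => ?_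
        rw [← Equiv.prod_comp σ fun i => x i (w (σ.symm i))]
        simp only [Equiv.symm_apply_apply]

end Combinatorics

theorem LinearIndependent.of_pairwise_dual_eq_zero_of_ne_zero {K V ι : Type*} [Field K]
    [AddCommGroup V] [Module K V] (v : ι → V) (f : ι → Module.Dual K V)
    (h1 : Pairwise fun i j => f i (v j) = 0) (h2 : ∀ i, f i (v i) ≠ 0) :
    LinearIndependent K v :=
  .of_pairwise_dual_eq_zero_one v (fun i => (f i (v i))⁻¹ • f i)
    (fun i j hij => by simp [h1 hij]) (fun i => by simp [h2 i])

section Polysymplectic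

variable {n s : ℕ}

def omTerm (i : Fin n) (j : Fin s) : ExteriorAlgebra ℝ (Vns n s) :=
  ι ℝ (bV n s (.inl i)) * ι ℝ (bV n s (.inr (i, j)))

theorem om_eq_sum_omTerm (j : Fin s) : om n s j = ∑ i, omTerm i j := rfl

theorem prod_om_pow_eq_sum_perm {H : Fin s → ℕ} {w : Fin n → Fin s}
    (hw : ∀ j, Fintype.card {k // w k = j} = H j) :
    (List.ofFn fun j => om n s j ^ H j).prod =
      ∑ σ : Equiv.Perm (Fin n), (List.ofFn fun i => omTerm i (w (σ.symm i))).prod := by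
  let x (i : Fin n) (j : Fin s) : Subalgebra.center ℝ (ExteriorAlgebra ℝ (Vns n s)) :=
    ⟨omTerm i j, ι_mul_ι_mem_center _ _⟩
  have hx (i : Fin n) (j j' : Fin s) : x i j * x i j' = 0 :=
    Subtype.ext (ι_mul_ι_mul_ι_mul_ι_self_s1 _ _ _)
  have key := congrArg Subtype.val (prod_sum_pow_card_fiber_eq_sum_perm x hx w)
  simp only [hw, ← List.prod_ofFn] at key
  simpa [x, om_eq_sum_omTerm, Function.comp_def] using key

def termIdx (f : Fin n → Fin s) : Fin (n * 2) → Idx n s :=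
  Function.uncurry (fun i => ![.inl i, .inr (i, f i)]) ∘ finProdFinEquiv.symm

theorem termIdx_injective (f : Fin n → Fin s) : (termIdx f).Injective := by
  refine Function.Injective.comp ?_ finProdFinEquiv.symm.injective
  rintro ⟨i, t⟩ ⟨i', t'⟩ h
  fin_cases t <;> fin_cases t' <;> simp_all

theorem termIdx_finProdFinEquiv_one (f : Fin n → Fin s) (i : Fin n) :
    termIdx f (finProdFinEquiv (i, 1)) = .inr (i, f i) := by
  simp [termIdx]

theorem inr_notMem_range_termIdx {f : Fin n → Fin s} {i : Fin n} {j : Fin s} (h : j ≠ f i) :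
    .inr (i, j) ∉ Set.range (termIdx f) := by
  rintro ⟨c, hc⟩
  obtain ⟨⟨i', t⟩, rfl⟩ := finProdFinEquiv.surjective c
  fin_cases t
  · simp [termIdx] at hc
  · obtain ⟨rfl, rfl⟩ : i' = i ∧ f i' = j := by simpa [termIdx] using hc
    exact h rfl

theorem prod_omTerm_eq_ιMulti (f : Fin n → Fin s) :
    (List.ofFn fun i => omTerm i (f i)).prod = ιMulti ℝ (n * 2) (bV n s ∘ termIdx f) := by
  rw [show bV n s ∘ termIdx f = Function.uncurry (fun i => bV n s ∘ ![.inl i, .inr (i, f i)]) ∘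
      finProdFinEquiv.symm from rfl, ιMulti_uncurry_finProdFinEquiv]
  simp only [ιMulti_two]
  rfl

theorem detCoord_prod_omTerm (f f' : Fin n → Fin s) :
    detCoord (bV n s) (termIdx f) (List.ofFn fun i => omTerm i (f' i)).prod =
      if f' = f then 1 else 0 := by
  rw [prod_omTerm_eq_ιMulti]
  split_ifs with h
  · subst h
    exact detCoord_ιMulti_self _ (termIdx_injective f')
  · obtain ⟨i, hi⟩ := Function.ne_iff.mp h
    refine detCoord_ιMulti_eq_zero _ (r := finProdFinEquiv (i, 1)) ?_
    rw [termIdx_finProdFinEquiv_one]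
    exact inr_notMem_range_termIdx hi

theorem detCoord_prod_om_pow {H : Fin s → ℕ} {w : Fin n → Fin s}
    (hw : ∀ j, Fintype.card {k // w k = j} = H j) (f : Fin n → Fin s) :
    detCoord (bV n s) (termIdx f) (List.ofFn fun j => om n s j ^ H j).prod =
      (Finset.univ.filter fun σ : Equiv.Perm (Fin n) => w ∘ σ.symm = f).card := by
  rw [prod_om_pow_eq_sum_perm hw, map_sum]
  simp_rw [detCoord_prod_omTerm]
  exact Finset.sum_boole _ _

end Polysymplectic

theorem stmt1 (n s : ℕ) :
    LinearIndependent ℝ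
      (fun H : {H : Fin s → ℕ // ∑ j, H j = n} =>
        (List.ofFn fun j : Fin s => om n s j ^ H.1 j).prod) := by
  choose w hw using fun H : {H : Fin s → ℕ // ∑ j, H j = n} =>
    exists_card_fiber_eq (α := Fin n) H.1 (by rw [H.2, Fintype.card_fin])
  refine .of_pairwise_dual_eq_zero_of_ne_zero _ (fun H => detCoord (bV n s) (termIdx (w H)))
    (fun H H' hne => ?_) (fun H => ?_)
  · dsimp only
    rw [detCoord_prod_om_pow (hw H'), Nat.cast_eq_zero, Finset.card_eq_zero,
      Finset.filter_eq_empty_iff]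
    intro σ _ hσ
    refine hne (Subtype.ext (funext fun j => ?_))
    rw [← hw H j, ← hw H' j, ← hσ, Function.comp_def, card_fiber_comp_perm]
  · rw [detCoord_prod_om_pow (hw H), Nat.cast_ne_zero, Finset.card_ne_zero]
    exact ⟨1, Finset.mem_filter.mpr ⟨Finset.mem_univ _, rfl⟩⟩
end
end

section
/- Let $(V,\omega_1,\ldots,\omega_s)$ be a non-degenerate polysymplectic vector space of rank $n$ with $s>1$, and let $e_1,\ldots,e_n,e^1_1,\ldots,e^s_n$ and $f_1,\ldots,f_n,f^1_1,\ldots,f^s_n$ be two polysymplectic bases. Then there exist an invertible $n\times n$ real matrix $\theta = (\theta^m_i)$ and a tensor $\eta = (\eta^{mj}_i)$ such that $f_i = \sum_m \theta^m_i e_m + \sum_{m,j}\eta^{mj}_i e^j_m$ and $f^j_i = \sum_m (\theta^{-1})^i_m e^j_m$ for all $i,j$, and moreover $\sum_m \theta^m_i \eta^{mj}_k = \sum_m \theta^m_k \eta^{mj}_i$ for all $i,k,j$. -/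
/-!
Pairing a polysymplectic basis vector with the forms reads off coordinates: `ω_j(e_i, ·)` is the
coordinate along `e^j_i`, while `ω_j(e^l_k, ·)` is minus the coordinate along `e_k` if `j = l`
and vanishes otherwise. Applied to the two bases, this shows that each `f^l_k` lies in the span
of `e^l_1, …, e^l_n`: its other coordinates are values `ω_j(f^l_k, ·)` with `j ≠ l`, and such
`j` exists because `s > 1`. The pairing `ω_l(f_i, f^l_k) = δ_ik` then makes the block of `f^l_k`
a left inverse of the block `θ` of `f_i` along `e_1, …, e_n`, and `ω_j(f_i, f_k) = 0` is the
symmetry condition on `θ` and `η`.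
-/

open Module
open scoped Matrix

section

variable {K V ι σ : Type*} [CommRing K] [AddCommGroup V] [Module K V] [Fintype ι]

theorem Module.Basis.sum_inl_add_sum_inr [Fintype σ]
    (e : Basis (ι ⊕ ι × σ) K V) (v : V) :
    ∑ m : ι, e.coord (Sum.inl m) v • e (Sum.inl m)
      + ∑ m : ι, ∑ j : σ, e.coord (Sum.inr (m, j)) v • e (Sum.inr (m, j)) = v := by
  conv_rhs => rw [← e.sum_repr v]
  rw [Fintype.sum_sum_type, Fintype.sum_prod_type]
  rfl

/-- `e (Sum.inl i)` is `e_i` and `e (Sum.inr (i, j))` is `e^j_i`. -/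
def IsPolysymplecticBasis (ω : σ → V →ₗ[K] V →ₗ[K] K) (e : Basis (ι ⊕ ι × σ) K V) : Prop :=
  ∀ (j : σ) (v w : V), ω j v w = ∑ i : ι,
    (e.coord (Sum.inl i) v * e.coord (Sum.inr (i, j)) w
      - e.coord (Sum.inl i) w * e.coord (Sum.inr (i, j)) v)

namespace IsPolysymplecticBasis

variable {ω : σ → V →ₗ[K] V →ₗ[K] K} {e f : Basis (ι ⊕ ι × σ) K V}

theorem apply_swap (he : IsPolysymplecticBasis ω e) (j : σ) (v w : V) :
    ω j w v = -ω j v w := by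
  rw [he, he, ← Finset.sum_neg_distrib]
  exact Finset.sum_congr rfl fun _ _ => by ring

theorem apply_basis_inl (he : IsPolysymplecticBasis ω e) (j : σ) (i : ι) (w : V) :
    ω j (e (Sum.inl i)) w = e.coord (Sum.inr (i, j)) w := by
  classical
  rw [he]
  simp [Basis.coord_apply, Finsupp.single_apply, eq_comm]

theorem apply_basis_inr_self (he : IsPolysymplecticBasis ω e) (j : σ) (k : ι) (w : V) :
    ω j (e (Sum.inr (k, j))) w = -e.coord (Sum.inl k) w := by
  classical
  rw [he]
  simp [Basis.coord_apply, Finsupp.single_apply]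

theorem apply_basis_inr_of_ne (he : IsPolysymplecticBasis ω e) {j l : σ} (h : j ≠ l)
    (k : ι) (w : V) : ω j (e (Sum.inr (k, l))) w = 0 := by
  classical
  rw [he]
  simp [Basis.coord_apply, h.symm]

theorem coord_inl_eq (he : IsPolysymplecticBasis ω e) (j : σ) (m : ι) (v : V) :
    e.coord (Sum.inl m) v = ω j v (e (Sum.inr (m, j))) := by
  rw [he.apply_swap, he.apply_basis_inr_self, neg_neg]

theorem coord_inl_basis_inr [Nontrivial σ] (he : IsPolysymplecticBasis ω e)
    (hf : IsPolysymplecticBasis ω f) (m k : ι) (l : σ) :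
    e.coord (Sum.inl m) (f (Sum.inr (k, l))) = 0 := by
  obtain ⟨j, hj⟩ := exists_ne l
  rw [he.coord_inl_eq j, hf.apply_basis_inr_of_ne hj]

theorem coord_inr_basis_inr_of_ne (he : IsPolysymplecticBasis ω e)
    (hf : IsPolysymplecticBasis ω f) {j l : σ} (h : j ≠ l) (m k : ι) :
    e.coord (Sum.inr (m, j)) (f (Sum.inr (k, l))) = 0 := by
  rw [← he.apply_basis_inl, he.apply_swap, hf.apply_basis_inr_of_ne h, neg_zero]

theorem sum_toMatrix_mul_toMatrix_comm (he : IsPolysymplecticBasis ω e) (hf : IsPolysymplecticBasis ω f)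
    (i k : ι) (j : σ) :
    ∑ m : ι, e.toMatrix f (Sum.inl m) (Sum.inl i) * e.toMatrix f (Sum.inr (m, j)) (Sum.inl k) =
      ∑ m : ι, e.toMatrix f (Sum.inl m) (Sum.inl k) * e.toMatrix f (Sum.inr (m, j)) (Sum.inl i) := by
  classical
  have hpair := hf.apply_basis_inl j i (f (Sum.inl k))
  rw [he, Finset.sum_sub_distrib] at hpair
  simpa [Basis.coord_apply, Finsupp.single_apply, Basis.toMatrix_apply, sub_eq_zero] using hpair

variable [Fintype σ]

theorem basis_inr_eq_sum [Nontrivial σ] (he : IsPolysymplecticBasis ω e)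
    (hf : IsPolysymplecticBasis ω f) (k : ι) (l : σ) :
    f (Sum.inr (k, l)) =
      ∑ m : ι, e.toMatrix f (Sum.inr (m, l)) (Sum.inr (k, l)) • e (Sum.inr (m, l)) := by
  conv_lhs => rw [← e.sum_toMatrix_smul_self f (Sum.inr (k, l))]
  simp only [Fintype.sum_sum_type, Fintype.sum_prod_type, Basis.toMatrix_apply,
    ← Basis.coord_apply, he.coord_inl_basis_inr hf, zero_smul, Finset.sum_const_zero, zero_add]
  refine Finset.sum_congr rfl fun m _ => Finset.sum_eq_single l (fun j _ hj => ?_) (by simp)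
  rw [he.coord_inr_basis_inr_of_ne hf hj, zero_smul]

theorem transpose_submatrix_inr_mul_submatrix_inl [DecidableEq ι] [Nontrivial σ]
    (he : IsPolysymplecticBasis ω e) (hf : IsPolysymplecticBasis ω f) (l : σ) :
    ((e.toMatrix f).submatrix (fun m => Sum.inr (m, l)) (fun k => Sum.inr (k, l)))ᵀ *
      (e.toMatrix f).submatrix Sum.inl Sum.inl = 1 := by
  classical
  ext k i
  have hpair := hf.apply_basis_inl l i (f (Sum.inr (k, l)))
  conv at hpair => lhs; rw [he.basis_inr_eq_sum hf k l]
  simp only [map_sum, map_smul, ← he.coord_inl_eq, smul_eq_mul] at hpair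
  rw [Matrix.mul_apply, Matrix.one_apply]
  simpa [Basis.coord_apply, Finsupp.single_apply, Basis.toMatrix_apply, eq_comm] using hpair

end IsPolysymplecticBasis

end

theorem stmt3 (n s : ℕ) (hs : 1 < s) (V : Type*) [AddCommGroup V] [Module ℝ V]
    (e f : Module.Basis (Fin n ⊕ Fin n × Fin s) ℝ V)
    (ω : Fin s → V →ₗ[ℝ] V →ₗ[ℝ] ℝ)
    (hωe : ∀ (j : Fin s) (v w : V),
      ω j v w = ∑ i : Fin n,
        (e.coord (Sum.inl i) v * e.coord (Sum.inr (i, j)) w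
          - e.coord (Sum.inl i) w * e.coord (Sum.inr (i, j)) v))
    (hωf : ∀ (j : Fin s) (v w : V),
      ω j v w = ∑ i : Fin n,
        (f.coord (Sum.inl i) v * f.coord (Sum.inr (i, j)) w
          - f.coord (Sum.inl i) w * f.coord (Sum.inr (i, j)) v)) :
    ∃ (θ : Matrix (Fin n) (Fin n) ℝ) (η : Fin n → Fin s → Fin n → ℝ),
      IsUnit θ ∧
      (∀ i : Fin n, f (Sum.inl i) =
        (∑ m : Fin n, θ m i • e (Sum.inl m))
          + ∑ m : Fin n, ∑ j : Fin s, η m j i • e (Sum.inr (m, j))) ∧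
      (∀ (i : Fin n) (j : Fin s), f (Sum.inr (i, j)) =
        ∑ m : Fin n, θ⁻¹ i m • e (Sum.inr (m, j))) ∧
      (∀ (i k : Fin n) (j : Fin s),
        ∑ m : Fin n, θ m i * η m j k = ∑ m : Fin n, θ m k * η m j i) := by
  have : Nontrivial (Fin s) := Fin.nontrivial_iff_two_le.mpr hs
  have he : IsPolysymplecticBasis ω e := hωe
  have hleft := he.transpose_submatrix_inr_mul_submatrix_inl hωf
  refine ⟨(e.toMatrix f).submatrix Sum.inl Sum.inl,
    fun m j i => e.toMatrix f (Sum.inr (m, j)) (Sum.inl i), ?_, fun i => ?_, fun i j => ?_,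
    he.sum_toMatrix_mul_toMatrix_comm hωf⟩
  · exact (Matrix.isUnit_iff_isUnit_det _).mpr
      (Matrix.isUnit_det_of_left_inverse (hleft ⟨0, by omega⟩))
  · exact (e.sum_inl_add_sum_inr (f (Sum.inl i))).symm
  · rw [Matrix.inv_eq_left_inv (hleft j)]
    exact he.basis_inr_eq_sum hωf i j
end

section
/- Let $(V,\omega_1,\ldots,\omega_s)$ be a non-degenerate polysymplectic vector space of rank $n$ with $s>1$, and suppose $e_1,\ldots,e_n,e^1_1,\ldots,e^s_n$ and $f_1,\ldots,f_n,f^1_1,\ldots,f^s_n$ are two polysymplectic bases which are both orthonormal with respect to a common positive definite inner product on $V$. Then $f_i \in \mathrm{span}(e_1,\ldots,e_n)$ for all $i$; i.e. the 'mixed' tensor $\eta$ in the change-of-basis formula vanishes identically. -/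
/-!
Let `B` be the common inner product. Each form `ω_j` is represented by the operator `J_j` with
`B w (J_j v) = ω_j w v`; since `B` is non-degenerate, `J_j` depends only on `ω_j` and `B`, not
on the orthonormal basis used to compute it. In a polysymplectic basis `J_j e_i = -e^j_i` and
`J_j e^k_i = δ_{jk} e_i`, so for `j ≠ k` the operator `J_j² J_k²` is the coordinate projection
onto `span (e_1, …, e_n)` along the `e^k_i`. Computing it in the basis `f` shows that it fixes
every `f_i`, hence `f_i` lies in `span (e_1, …, e_n)`.
-/

namespace Module.Basis

open Finset

variable {R M : Type*} [CommRing R] [AddCommGroup M] [Module R M]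

lemma apply_eq_coord_of_orthonormal {α : Type*} [DecidableEq α] {g : Basis α R M}
    {B : M →ₗ[R] M →ₗ[R] R} (hBg : ∀ a b, B (g a) (g b) = if a = b then 1 else 0)
    (w : M) (a : α) :
    B w (g a) = g.coord a w := by
  change B.flip (g a) w = g.coord a w
  congr 1
  exact g.ext fun b => by simp [hBg, Finsupp.single_apply, eq_comm]

variable {ι κ : Type*} [Fintype ι]

noncomputable def polysymplecticRotation (g : Basis (ι ⊕ ι × κ) R M) (j : κ) : M →ₗ[R] M :=
  ∑ i : ι, ((g.coord (.inr (i, j))).smulRight (g (.inl i))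
    - (g.coord (.inl i)).smulRight (g (.inr (i, j))))

noncomputable def inlProjection (g : Basis (ι ⊕ ι × κ) R M) : M →ₗ[R] M :=
  ∑ i : ι, (g.coord (.inl i)).smulRight (g (.inl i))

variable (g : Basis (ι ⊕ ι × κ) R M)

lemma polysymplecticRotation_apply (j : κ) (v : M) :
    g.polysymplecticRotation j v = ∑ i : ι,
      (g.coord (.inr (i, j)) v • g (.inl i) - g.coord (.inl i) v • g (.inr (i, j))) := by
  simp [polysymplecticRotation]

lemma inlProjection_apply_mem_span (v : M) :
    g.inlProjection v ∈ Submodule.span R (Set.range fun i : ι => g (.inl i)) := by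
  simp only [inlProjection, LinearMap.coe_sum, Finset.sum_apply, LinearMap.smulRight_apply]
  exact Submodule.sum_mem _ fun i _ => Submodule.smul_mem _ _ (Submodule.subset_span ⟨i, rfl⟩)

variable [DecidableEq ι] [DecidableEq κ]

@[simp]
lemma polysymplecticRotation_inl (j : κ) (i : ι) :
    g.polysymplecticRotation j (g (.inl i)) = -g (.inr (i, j)) := by
  simp [polysymplecticRotation_apply, Finsupp.single_apply]

@[simp]
lemma polysymplecticRotation_inr (j k : κ) (i : ι) :
    g.polysymplecticRotation j (g (.inr (i, k))) = if k = j then g (.inl i) else 0 := by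
  by_cases h : k = j <;> simp [polysymplecticRotation_apply, Finsupp.single_apply, h]

lemma inlProjection_apply_inl (i : ι) : g.inlProjection (g (.inl i)) = g (.inl i) := by
  simp [inlProjection, Finsupp.single_apply]

lemma rotation_sq_comp_rotation_sq {j k : κ} (hjk : j ≠ k) :
    g.polysymplecticRotation j ∘ₗ g.polysymplecticRotation j ∘ₗ
      g.polysymplecticRotation k ∘ₗ g.polysymplecticRotation k = g.inlProjection := by
  refine g.ext fun a => ?_
  rcases a with i | ⟨i, l⟩
  · simp [inlProjection_apply_inl]
  · by_cases hl : l = k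
    · simp [hl, hjk.symm, inlProjection]
    · simp [hl, inlProjection]

lemma apply_polysymplecticRotation_of_orthonormal {g : Basis (ι ⊕ ι × κ) R M}
    {B : M →ₗ[R] M →ₗ[R] R} (hBg : ∀ a b, B (g a) (g b) = if a = b then 1 else 0)
    (j : κ) (w v : M) :
    B w (g.polysymplecticRotation j v) = ∑ i : ι,
      (g.coord (.inl i) w * g.coord (.inr (i, j)) v
        - g.coord (.inl i) v * g.coord (.inr (i, j)) w) := by
  simp only [polysymplecticRotation_apply, map_sum, map_sub, map_smul,
    apply_eq_coord_of_orthonormal hBg, smul_eq_mul]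
  exact sum_congr rfl fun i _ => by ring

end Module.Basis

open Module.Basis

theorem stmt5_general (n s : ℕ) (hs : 1 < s) (V : Type*) [AddCommGroup V] [Module ℝ V]
    (e f : Module.Basis (Fin n ⊕ Fin n × Fin s) ℝ V)
    (ω : Fin s → V →ₗ[ℝ] V →ₗ[ℝ] ℝ)
    (hωe : ∀ (j : Fin s) (v w : V),
      ω j v w = ∑ i : Fin n,
        (e.coord (Sum.inl i) v * e.coord (Sum.inr (i, j)) w
          - e.coord (Sum.inl i) w * e.coord (Sum.inr (i, j)) v))
    (hωf : ∀ (j : Fin s) (v w : V),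
      ω j v w = ∑ i : Fin n,
        (f.coord (Sum.inl i) v * f.coord (Sum.inr (i, j)) w
          - f.coord (Sum.inl i) w * f.coord (Sum.inr (i, j)) v))
    (B : V →ₗ[ℝ] V →ₗ[ℝ] ℝ)
    (hBpos : ∀ v : V, v ≠ 0 → 0 < B v v)
    (hBe : ∀ a b : Fin n ⊕ Fin n × Fin s, B (e a) (e b) = if a = b then 1 else 0)
    (hBf : ∀ a b : Fin n ⊕ Fin n × Fin s, B (f a) (f b) = if a = b then 1 else 0) :
    ∀ i : Fin n,
      f (Sum.inl i) ∈ Submodule.span ℝ (Set.range fun m : Fin n => e (Sum.inl m)) := by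
  intro i
  have hB : Function.Injective B.flip :=
    LinearMap.ker_eq_bot.mp <| LinearMap.separatingRight_iff_flip_ker_eq_bot.mp fun v hv =>
      by_contra fun hv0 => (hBpos v hv0).ne' (hv v)
  have hJ : ∀ j, e.polysymplecticRotation j = f.polysymplecticRotation j := fun j =>
    LinearMap.ext fun v => hB <| LinearMap.ext fun w => by
      rw [LinearMap.flip_apply, LinearMap.flip_apply,
        apply_polysymplecticRotation_of_orthonormal hBe,
        apply_polysymplecticRotation_of_orthonormal hBf, ← hωe, ← hωf]
  have h01 : (⟨0, by omega⟩ : Fin s) ≠ ⟨1, hs⟩ := by simp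
  rw [← f.inlProjection_apply_inl i, ← f.rotation_sq_comp_rotation_sq h01, ← hJ, ← hJ,
    e.rotation_sq_comp_rotation_sq h01]
  exact e.inlProjection_apply_mem_span _

theorem stmt5 (n s : ℕ) (hs : 1 < s) (V : Type*) [AddCommGroup V] [Module ℝ V]
    (e f : Module.Basis (Fin n ⊕ Fin n × Fin s) ℝ V)
    (ω : Fin s → V →ₗ[ℝ] V →ₗ[ℝ] ℝ)
    (hωe : ∀ (j : Fin s) (v w : V),
      ω j v w = ∑ i : Fin n,
        (e.coord (Sum.inl i) v * e.coord (Sum.inr (i, j)) w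
          - e.coord (Sum.inl i) w * e.coord (Sum.inr (i, j)) v))
    (hωf : ∀ (j : Fin s) (v w : V),
      ω j v w = ∑ i : Fin n,
        (f.coord (Sum.inl i) v * f.coord (Sum.inr (i, j)) w
          - f.coord (Sum.inl i) w * f.coord (Sum.inr (i, j)) v))
    (B : V →ₗ[ℝ] V →ₗ[ℝ] ℝ)
    (hBsymm : ∀ v w, B v w = B w v)
    (hBpos : ∀ v : V, v ≠ 0 → 0 < B v v)
    (hBe : ∀ a b : Fin n ⊕ Fin n × Fin s, B (e a) (e b) = if a = b then 1 else 0)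
    (hBf : ∀ a b : Fin n ⊕ Fin n × Fin s, B (f a) (f b) = if a = b then 1 else 0) :
    ∀ i : Fin n,
      f (Sum.inl i) ∈ Submodule.span ℝ (Set.range fun m : Fin n => e (Sum.inl m)) :=
  stmt5_general n s hs V e f ω hωe hωf B hBpos hBe hBf
end

section
/- In the setting of the flat Lefschetz operators on $\bigwedge^*(\mathbb{R}^{n(s+1)})^*$, for distinct indices $k \ne h$ one has $[[L_k,\Lambda_h], L_h] = L_k$ and $[[L_k,\Lambda_h],\Lambda_k] = -\Lambda_h$, while for pairwise distinct $h,k,l$ one has $[[L_k,\Lambda_h], L_l] = 0$. -/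
/-!
STATEMENT 10: For the flat Lefschetz operators, for `k ≠ h` one has
`[[L_k, Λ_h], L_h] = L_k` and `[[L_k, Λ_h], Λ_k] = -Λ_h`, and for pairwise distinct
`h, k, l` one has `[[L_k, Λ_h], L_l] = 0`.
-/

noncomputable section

abbrev Wns (n s : ℕ) := ExteriorAlgebra ℝ (Vns n s)

/-- An identification of the index set with `Fin (n + n*s)`, fixing an ordering of the
basis covectors `dx_1, …, dx_n, dy^1_1, …, dy^s_n`. -/
def idxEquiv (n s : ℕ) : Idx n s ≃ Fin (n + n * s) :=
  (Equiv.sumCongr (Equiv.refl (Fin n)) finProdFinEquiv).trans finSumFinEquiv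

/-- The basis monomial `e_{a_1} ∧ ⋯ ∧ e_{a_k}` of the exterior algebra associated to a
finite set `P` of indices (taken in increasing order). -/
def mono (n s : ℕ) (P : Finset (Idx n s)) : Wns n s :=
  (((P.image (idxEquiv n s)).sort (· ≤ ·)).map
    fun t => ExteriorAlgebra.ι ℝ (bV n s ((idxEquiv n s).symm t))).prod

/-- The Lefschetz operator `L_k`: wedge multiplication by `ω_k = ∑ i, dx_i ∧ dy^k_i`. -/
def Lop (n s : ℕ) (k : Fin s) : Wns n s →ₗ[ℝ] Wns n s :=
  LinearMap.mulLeft ℝ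
    (∑ i : Fin n,
      ExteriorAlgebra.ι ℝ (bV n s (Sum.inl i))
        * ExteriorAlgebra.ι ℝ (bV n s (Sum.inr (i, k))))

/-- Commutator of endomorphisms. -/
def lcomm {R M : Type*} [CommSemiring R] [AddCommGroup M] [Module R M]
    (A B : M →ₗ[R] M) : M →ₗ[R] M :=
  A ∘ₗ B - B ∘ₗ A

/-! Wedge multiplication `e_t ∧ ·` and contraction `ι_t` by the dual basis satisfy the canonical
anticommutation relations `{e_t, e_u} = 0`, `{ι_t, ι_u} = 0`, `{ι_t, e_u} = δ_tu`, and they are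
adjoint for any form making the monomials orthonormal; hence `Λ_k = ∑ i, ι_{y^k_i} ι_{x_i}`.
In any ring, `[pq, rs]` expands into the anticommutators `{q,r}`, `{q,s}`, `{p,r}`, `{p,s}`, so
every commutator of the quadratic operators `L_k`, `Λ_h` and `E_kh = ∑ i, e_{y^k_i} ι_{y^h_i}`
collapses to a sum of Kronecker deltas: `[L_k, Λ_h] = E_kh` for `k ≠ h`, `[E_kh, L_h] = L_k`,
`[E_kh, Λ_k] = -Λ_h`, and `[E_kh, L_l] = 0` for `l ≠ h`. -/

/-- The canonical anticommutation relations. -/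
structure IsCAR {J A : Type*} [DecidableEq J] [Ring A] (a c : J → A) : Prop where
  anticomm_create : ∀ t u, a t * a u + a u * a t = 0
  anticomm_annihilate : ∀ t u, c t * c u + c u * c t = 0
  anticomm_annihilate_create : ∀ t u, c t * a u + a u * c t = if t = u then 1 else 0

namespace IsCAR

variable {J J' A : Type*} [DecidableEq J] [DecidableEq J'] [Ring A] {a c : J → A}

theorem anticomm_create_annihilate (h : IsCAR a c) (t u : J) :
    a t * c u + c u * a t = if u = t then 1 else 0 := by
  rw [add_comm, h.anticomm_annihilate_create]

theorem create_mul_create (h : IsCAR a c) (t u : J) : a t * a u = -(a u * a t) :=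
  eq_neg_of_add_eq_zero_left (h.anticomm_create t u)

theorem annihilate_mul_annihilate (h : IsCAR a c) (t u : J) : c t * c u = -(c u * c t) :=
  eq_neg_of_add_eq_zero_left (h.anticomm_annihilate t u)

theorem annihilate_mul_create_of_ne (h : IsCAR a c) {t u : J} (htu : t ≠ u) :
    c t * a u = -(a u * c t) :=
  eq_neg_of_add_eq_zero_left (by rw [h.anticomm_annihilate_create, if_neg htu])

theorem comp (h : IsCAR a c) {e : J' → J} (he : Function.Injective e) :
    IsCAR (a ∘ e) (c ∘ e) where
  anticomm_create t u := h.anticomm_create (e t) (e u)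
  anticomm_annihilate t u := h.anticomm_annihilate (e t) (e u)
  anticomm_annihilate_create t u := by
    simp only [Function.comp_apply, h.anticomm_annihilate_create, he.eq_iff]

end IsCAR

section RingCommutator

variable {A : Type*} [Ring A]

theorem lie_mul_mul (p q r s : A) :
    ⁅p * q, r * s⁆ = p * (q * r + r * q) * s - p * r * (q * s + s * q)
      + (p * r + r * p) * s * q - r * (p * s + s * p) * q := by
  simp only [Ring.lie_def]
  noncomm_ring

theorem lie_sum_sum_of_diag {ι : Type*} [Fintype ι] [DecidableEq ι] {f g d : ι → A}
    (h : ∀ i j, ⁅f i, g j⁆ = if i = j then d i else 0) :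
    ⁅∑ i, f i, ∑ j, g j⁆ = ∑ i, d i := by
  simp only [Ring.lie_def] at h ⊢
  rw [Finset.sum_mul_sum, Finset.sum_mul_sum, Finset.sum_comm (f := fun j i => g j * f i)]
  simp [← Finset.sum_sub_distrib, h]

theorem lcomm_eq_lie {R M : Type*} [CommSemiring R] [AddCommGroup M] [Module R M]
    (f g : Module.End R M) : lcomm f g = ⁅f, g⁆ :=
  (Ring.lie_def f g).symm

end RingCommutator

section Lefschetz

variable {A : Type*} [Ring A] {n s : ℕ}

def lefschetz (a : Idx n s → A) (k : Fin s) : A :=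
  ∑ i, a (.inl i) * a (.inr (i, k))

def dualLefschetz (c : Idx n s → A) (k : Fin s) : A :=
  ∑ i, c (.inr (i, k)) * c (.inl i)

/-- `∑ i, dy^k_i ∧ ι_{y^h_i}`: it replaces a factor `dy^h_i` by `dy^k_i`. -/
def exchange (a c : Idx n s → A) (k h : Fin s) : A :=
  ∑ i, a (.inr (i, k)) * c (.inr (i, h))

theorem isAdjointPair_lefschetz {R N : Type*} [CommRing R] [AddCommGroup N] [Module R N]
    {B : N →ₗ[R] N →ₗ[R] R} {a c : Idx n s → Module.End R N}
    (h : ∀ t, LinearMap.IsAdjointPair B B (a t) (c t)) (k : Fin s) :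
    LinearMap.IsAdjointPair B B (lefschetz a k : Module.End R N)
      (dualLefschetz c k : Module.End R N) := fun x y => by
  simp only [lefschetz, dualLefschetz, map_sum, LinearMap.sum_apply]
  exact Finset.sum_congr rfl fun i _ => ((h _).mul (h _)) x y

variable {a c : Idx n s → A} (hac : IsCAR a c)
include hac

theorem lie_lefschetz_dualLefschetz {k h : Fin s} (hkh : k ≠ h) :
    ⁅lefschetz a k, dualLefschetz c h⁆ = exchange a c k h := by
  refine lie_sum_sum_of_diag fun i j => ?_
  rcases eq_or_ne i j with rfl | hij
  · have hswap := hac.annihilate_mul_create_of_ne (t := .inr (i, h)) (u := .inr (i, k))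
      (by simp [hkh.symm])
    simp [lie_mul_mul, hac.anticomm_create_annihilate, hswap]
  · simp [lie_mul_mul, hac.anticomm_create_annihilate, hkh.symm, hij, hij.symm]

theorem lie_exchange_lefschetz (k h : Fin s) :
    ⁅exchange a c k h, lefschetz a h⁆ = lefschetz a k := by
  refine lie_sum_sum_of_diag fun i j => ?_
  rcases eq_or_ne i j with rfl | hij
  · simp [lie_mul_mul, hac.anticomm_create, hac.anticomm_annihilate_create,
      hac.create_mul_create (.inr (i, k)) (.inl i)]
  · simp [lie_mul_mul, hac.anticomm_create, hac.anticomm_annihilate_create, hij]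

theorem lie_exchange_dualLefschetz (k h : Fin s) :
    ⁅exchange a c k h, dualLefschetz c k⁆ = -dualLefschetz c h := by
  simp only [dualLefschetz, ← Finset.sum_neg_distrib]
  refine lie_sum_sum_of_diag fun i j => ?_
  rcases eq_or_ne i j with rfl | hij
  · simp [lie_mul_mul, hac.anticomm_annihilate, hac.anticomm_create_annihilate,
      hac.annihilate_mul_annihilate (.inl i) (.inr (i, h))]
  · simp [lie_mul_mul, hac.anticomm_annihilate, hac.anticomm_create_annihilate, hij, hij.symm]

theorem lie_exchange_lefschetz_of_ne (k : Fin s) {h l : Fin s} (hhl : h ≠ l) :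
    ⁅exchange a c k h, lefschetz a l⁆ = 0 := by
  rw [← Finset.sum_const_zero (s := (Finset.univ : Finset (Fin n)))]
  refine lie_sum_sum_of_diag fun i j => ?_
  simp [lie_mul_mul, hac.anticomm_create, hac.anticomm_annihilate_create, hhl]

end Lefschetz

namespace ExteriorAlgebra

open Set.powersetCard

variable {R M : Type*} [CommRing R] [AddCommGroup M] [Module R M]

theorem isCAR_mulLeft_ι_contractLeft {J : Type*} [DecidableEq J] (b : Module.Basis J R M) :
    IsCAR (fun t => LinearMap.mulLeft R (ι R (b t)))
      (fun t => CliffordAlgebra.contractLeft (b.coord t)) where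
  anticomm_create t u := LinearMap.ext fun x => by
    simp only [LinearMap.add_apply, Module.End.mul_apply, LinearMap.mulLeft_apply,
      LinearMap.zero_apply, ← mul_assoc, ← add_mul, ι_add_mul_swap, zero_mul]
  anticomm_annihilate t u := LinearMap.ext fun x => by
    rw [LinearMap.add_apply, Module.End.mul_apply, Module.End.mul_apply,
      CliffordAlgebra.contractLeft_comm, neg_add_cancel, LinearMap.zero_apply]
  anticomm_annihilate_create t u := LinearMap.ext fun x => by
    simp only [LinearMap.add_apply, Module.End.mul_apply, LinearMap.mulLeft_apply,
      CliffordAlgebra.contractLeft_ι_mul, sub_add_cancel, Module.Basis.coord_apply,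
      Module.Basis.repr_self, Finsupp.single_apply, eq_comm (a := u)]
    split_ifs <;> simp

variable {I : Type*} [LinearOrder I] (b : Module.Basis I R M)

theorem basis_eq_prod_sort (S : Finset I) :
    b.ExteriorAlgebra S = ((S.sort).map fun i => ι R (b i)).prod := by
  rw [basis_apply, ← List.ofFn_getElem_eq_map, List.ofFn_congr (Finset.length_sort (· ≤ ·))]
  rfl

theorem basis_empty : b.ExteriorAlgebra ∅ = 1 := by
  simp [basis_eq_prod_sort]

theorem basis_singleton (t : I) : b.ExteriorAlgebra {t} = ι R (b t) := by
  simp [basis_eq_prod_sort]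

variable {b}

theorem ι_mul_basis_of_mem {t : I} {S : Finset I} (h : t ∈ S) :
    ι R (b t) * b.ExteriorAlgebra S = 0 := by
  rw [← basis_singleton]
  exact basis_mul_of_not_disjoint b (ofCard (Finset.card_singleton t)) (ofCard (s := S) rfl)
    (by simpa using h)

theorem ι_mul_basis_of_notMem {t : I} {S : Finset I} (h : t ∉ S) :
    ∃ ε : ℤˣ, ι R (b t) * b.ExteriorAlgebra S = ε • b.ExteriorAlgebra (insert t S) := by
  have hd : Disjoint {t} S := Finset.disjoint_singleton_left.mpr h
  have e : insert t S = ({t} : Finset I).disjUnion S hd := by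
    rw [Finset.disjUnion_eq_union, Finset.insert_eq]
  rw [← basis_singleton, e]
  exact ⟨_, basis_mul_of_disjoint b (ofCard (Finset.card_singleton t)) (ofCard (s := S) rfl) hd⟩

theorem contractLeft_coord_basis_of_notMem {t : I} {S : Finset I} (h : t ∉ S) :
    CliffordAlgebra.contractLeft (b.coord t) (b.ExteriorAlgebra S) = 0 := by
  induction S using Finset.induction_on with
  | empty => rw [basis_empty, CliffordAlgebra.contractLeft_one]
  | insert u S hu ih =>
    obtain ⟨htu, htS⟩ : t ≠ u ∧ t ∉ S := by simpa using h
    obtain ⟨ε, hε⟩ := ι_mul_basis_of_notMem (b := b) hu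
    rw [← inv_smul_eq_iff] at hε
    rw [← hε, Units.smul_def, map_zsmul, CliffordAlgebra.contractLeft_ι_mul, ih htS]
    simp [htu]

theorem contractLeft_coord_basis_insert {t : I} {S : Finset I} (h : t ∉ S) :
    ∃ ε : ℤˣ, ι R (b t) * b.ExteriorAlgebra S = ε • b.ExteriorAlgebra (insert t S) ∧
      CliffordAlgebra.contractLeft (b.coord t) (b.ExteriorAlgebra (insert t S)) =
        ε • b.ExteriorAlgebra S := by
  obtain ⟨ε, hε⟩ := ι_mul_basis_of_notMem (b := b) h
  refine ⟨ε, hε, ?_⟩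
  have := congr_arg (CliffordAlgebra.contractLeft (b.coord t)) hε
  rw [CliffordAlgebra.contractLeft_ι_mul, contractLeft_coord_basis_of_notMem h, Units.smul_def,
    map_zsmul, Module.Basis.coord_apply, Module.Basis.repr_self, Finsupp.single_eq_same,
    one_smul, mul_zero, sub_zero] at this
  rw [← Int.units_inv_eq_self ε, eq_inv_smul_iff, Units.smul_def, ← this]

theorem isAdjointPair_toDual_mulLeft_ι_contractLeft (t : I) :
    LinearMap.IsAdjointPair b.ExteriorAlgebra.toDual b.ExteriorAlgebra.toDual
      (LinearMap.mulLeft R (ι R (b t))) (CliffordAlgebra.contractLeft (b.coord t)) := by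
  rw [LinearMap.isAdjointPair_iff_comp_eq_compl₂]
  refine b.ExteriorAlgebra.ext fun S => b.ExteriorAlgebra.ext fun T => ?_
  simp only [LinearMap.comp_apply, LinearMap.compl₂_apply, LinearMap.mulLeft_apply,
    Module.Basis.toDual_apply_left, Module.Basis.toDual_apply_right]
  by_cases htT : t ∈ T
  · obtain ⟨T, htT', rfl⟩ : ∃ T', t ∉ T' ∧ insert t T' = T :=
      ⟨T.erase t, Finset.notMem_erase t T, Finset.insert_erase htT⟩
    obtain ⟨ε, hι, hT⟩ := contractLeft_coord_basis_insert (b := b) htT'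
    rw [hT]
    by_cases htS : t ∈ S
    · have hTS : T ≠ S := by rintro rfl; exact htT' htS
      simp [ι_mul_basis_of_mem htS, hTS]
    · rcases eq_or_ne S T with rfl | hST
      · simp [hι]
      · have hST' : insert t S ≠ insert t T := fun h' => hST <| by
          rw [← Finset.erase_insert htS, h', Finset.erase_insert htT']
        obtain ⟨ε', hS⟩ := ι_mul_basis_of_notMem (b := b) htS
        simp [hS, hST', hST.symm]
  · have hST : insert t S ≠ T := fun h' => htT (h' ▸ Finset.mem_insert_self t S)
    rw [contractLeft_coord_basis_of_notMem htT, map_zero, Finsupp.zero_apply]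
    by_cases htS : t ∈ S
    · rw [ι_mul_basis_of_mem htS, map_zero, Finsupp.zero_apply]
    · obtain ⟨ε', hS⟩ := ι_mul_basis_of_notMem (b := b) htS
      simp [hS, hST]

end ExteriorAlgebra

theorem Module.Basis.eq_of_isAdjointPair_toDual {R N κ : Type*} [CommRing R] [AddCommGroup N]
    [Module R N] [DecidableEq κ] (β : Module.Basis κ R N) {f g g' : N →ₗ[R] N}
    (h : LinearMap.IsAdjointPair β.toDual β.toDual f g)
    (h' : LinearMap.IsAdjointPair β.toDual β.toDual f g') : g = g' :=
  LinearMap.ext fun y => β.ext_elem fun i => by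
    rw [← β.toDual_apply_right, ← β.toDual_apply_right, ← h, h']

/-- The basis of covectors ordered as in `mono`. -/
def covectorBasis (n s : ℕ) : Module.Basis (Fin (n + n * s)) ℝ (Vns n s) :=
  (bV n s).reindex (idxEquiv n s)

theorem covectorBasis_exteriorAlgebra_apply {n s : ℕ} (S : Finset (Fin (n + n * s))) :
    (covectorBasis n s).ExteriorAlgebra S = mono n s (S.image (idxEquiv n s).symm) := by
  rw [ExteriorAlgebra.basis_eq_prod_sort, mono, Finset.image_image,
    Equiv.self_comp_symm, Finset.image_id]
  simp [covectorBasis, Module.Basis.reindex_apply]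

theorem eq_toDual_of_orthonormal {n s : ℕ} {B : Wns n s →ₗ[ℝ] Wns n s →ₗ[ℝ] ℝ}
    (hB : ∀ P Q : Finset (Idx n s), B (mono n s P) (mono n s Q) = if P = Q then 1 else 0) :
    B = (covectorBasis n s).ExteriorAlgebra.toDual :=
  LinearMap.ext_basis _ _ fun S T => by
    rw [Module.Basis.toDual_apply, covectorBasis_exteriorAlgebra_apply,
      covectorBasis_exteriorAlgebra_apply, hB]
    simp only [(Finset.image_injective (idxEquiv n s).symm.injective).eq_iff]

theorem Lop_eq_lefschetz (n s : ℕ) (k : Fin s) :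
    Lop n s k = lefschetz (fun t =>
      LinearMap.mulLeft ℝ (ExteriorAlgebra.ι ℝ (covectorBasis n s (idxEquiv n s t)))) k := by
  ext x
  simp [Lop, lefschetz, covectorBasis, Module.Basis.reindex_apply, Finset.sum_mul, mul_assoc]

theorem stmt10_general (n s : ℕ)
    (B : Wns n s →ₗ[ℝ] Wns n s →ₗ[ℝ] ℝ)
    (hBortho : ∀ P Q : Finset (Idx n s),
      B (mono n s P) (mono n s Q) = if P = Q then 1 else 0)
    (Λ : Fin s → (Wns n s →ₗ[ℝ] Wns n s))
    (hΛ : ∀ (k : Fin s) (α β : Wns n s), B (Lop n s k α) β = B α (Λ k β)) :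
    (∀ k h : Fin s, k ≠ h →
      lcomm (lcomm (Lop n s k) (Λ h)) (Lop n s h) = Lop n s k
      ∧ lcomm (lcomm (Lop n s k) (Λ h)) (Λ k) = -(Λ h)) ∧
    (∀ k h l : Fin s, k ≠ h → h ≠ l → k ≠ l →
      lcomm (lcomm (Lop n s k) (Λ h)) (Lop n s l) = 0) := by
  set β := covectorBasis n s
  set a : Idx n s → Module.End ℝ (Wns n s) :=
    fun t => LinearMap.mulLeft ℝ (ExteriorAlgebra.ι ℝ (β (idxEquiv n s t)))
  set c : Idx n s → Module.End ℝ (Wns n s) :=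
    fun t => CliffordAlgebra.contractLeft (β.coord (idxEquiv n s t))
  have hac : IsCAR a c :=
    (ExteriorAlgebra.isCAR_mulLeft_ι_contractLeft β).comp (idxEquiv n s).injective
  have hL : ∀ k, Lop n s k = lefschetz a k := Lop_eq_lefschetz n s
  have hΛ' : ∀ k, Λ k = dualLefschetz c k := fun k => by
    rw [eq_toDual_of_orthonormal hBortho] at hΛ
    exact β.ExteriorAlgebra.eq_of_isAdjointPair_toDual (hΛ k) (hL k ▸ isAdjointPair_lefschetz
      (fun t => ExteriorAlgebra.isAdjointPair_toDual_mulLeft_ι_contractLeft _) k)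
  simp only [lcomm_eq_lie, hL, hΛ']
  refine ⟨fun k h hkh => ⟨?_, ?_⟩, fun k h l hkh hhl _ => ?_⟩
  · rw [lie_lefschetz_dualLefschetz hac hkh, lie_exchange_lefschetz hac]
  · rw [lie_lefschetz_dualLefschetz hac hkh, lie_exchange_dualLefschetz hac]
  · rw [lie_lefschetz_dualLefschetz hac hkh, lie_exchange_lefschetz_of_ne hac k hhl]

theorem stmt10 (n s : ℕ)
    (B : Wns n s →ₗ[ℝ] Wns n s →ₗ[ℝ] ℝ)
    (hBsymm : ∀ α β, B α β = B β α)
    (hBortho : ∀ P Q : Finset (Idx n s),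
      B (mono n s P) (mono n s Q) = if P = Q then 1 else 0)
    (Λ : Fin s → (Wns n s →ₗ[ℝ] Wns n s))
    (hΛ : ∀ (k : Fin s) (α β : Wns n s), B (Lop n s k α) β = B α (Λ k β)) :
    (∀ k h : Fin s, k ≠ h →
      lcomm (lcomm (Lop n s k) (Λ h)) (Lop n s h) = Lop n s k
      ∧ lcomm (lcomm (Lop n s k) (Λ h)) (Λ k) = -(Λ h)) ∧
    (∀ k h l : Fin s, k ≠ h → h ≠ l → k ≠ l →
      lcomm (lcomm (Lop n s k) (Λ h)) (Lop n s l) = 0) :=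
  stmt10_general n s B hBortho Λ hΛ
end
end

section
/- In the flat setting, $[L_k,\Lambda_h] = \sum_{i=1}^n E^i_k I^i_h$ for $k\neq h$, where $E^i_k$ is wedge multiplication by $dy^k_i$ and $I^i_h$ is contraction with the dual vector of $dy^h_i$. -/
/-!
STATEMENT 11: In the flat setting, `[L_k, Λ_h] = ∑ i, E^i_k I^i_h` for `k ≠ h`, where
`E^i_k` is wedge multiplication by `dy^k_i` and `I^i_h` is contraction with the dual
vector of `dy^h_i`.
-/

noncomputable section

/-- Exterior multiplication by the basis covector indexed by `a`. -/
def Eop (n s : ℕ) (a : Idx n s) : Wns n s →ₗ[ℝ] Wns n s :=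
  LinearMap.mulLeft ℝ (ExteriorAlgebra.ι ℝ (bV n s a))

/-- Interior contraction with the dual vector of the basis covector indexed by `a`. -/
def Iop (n s : ℕ) (a : Idx n s) : Wns n s →ₗ[ℝ] Wns n s :=
  CliffordAlgebra.contractLeft ((bV n s).coord a)

/-
The monomials `e_S` (wedge products of the basis covectors indexed by `S`, in increasing order)
are `B`-orthonormal and span the exterior algebra, so `B` is nondegenerate and adjoints are unique.
Wedging with `e_a` sends `e_S` to `±e_{S ∪ {a}}` and contracting with the dual vector sends
`e_{S ∪ {a}}` back to `e_S` with the same sign, so `E_a` and `I_a` are adjoint and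
`Λ_h = ∑ j, I_{y^h_j} I_{x_j}`. The commutator then follows from the anticommutation relations
`I_c E_a + E_a I_c = δ_{ac}`: for `k ≠ h` only the pairs `dx_i`, `dx_j` fail to anticommute, and
they contribute `δ_{ij} E_{y^k_i} I_{y^h_j}`.
-/

lemma mul_mul_sub_mul_mul_eq_smul {R A : Type*} [CommRing R] [Ring A] [Algebra R A]
    {a b c d : A} {r : R} (hca : c * a = -(a * c)) (hcb : c * b = -(b * c))
    (hdb : d * b = -(b * d)) (hda : d * a + a * d = algebraMap R A r) :
    a * b * (c * d) - c * d * (a * b) = r • (b * c) := by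
  have hda' : d * a = algebraMap R A r - a * d := eq_sub_of_add_eq hda
  have hcdab : c * d * (a * b) = r • (c * b) - c * a * (d * b) := by
    rw [show c * d * (a * b) = c * (d * a) * b by simp only [mul_assoc], hda', mul_sub, sub_mul,
      ← Algebra.commutes, Algebra.algebraMap_eq_smul_one, smul_mul_assoc, one_mul,
      smul_mul_assoc]
    simp only [mul_assoc]
  have hcadb : c * a * (d * b) = -(a * b * (c * d)) := by
    rw [hca, hdb, neg_mul_neg, show a * c * (b * d) = a * (c * b) * d by simp only [mul_assoc],
      hcb]
    simp only [mul_neg, neg_mul, mul_assoc]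
  rw [hcdab, hcadb, hcb, smul_neg]
  abel

lemma lcomm_eq_mul_sub_mul {R M : Type*} [CommRing R] [AddCommGroup M] [Module R M]
    (A B : Module.End R M) : lcomm A B = A * B - B * A := rfl

lemma lcomm_sum_sum {R M κ κ' : Type*} [CommRing R] [AddCommGroup M] [Module R M]
    (s : Finset κ) (t : Finset κ') (A : κ → Module.End R M) (C : κ' → Module.End R M) :
    lcomm (∑ i ∈ s, A i) (∑ j ∈ t, C j) = ∑ i ∈ s, ∑ j ∈ t, lcomm (A i) (C j) := by
  simp only [lcomm_eq_mul_sub_mul, Finset.sum_mul_sum, Finset.sum_sub_distrib]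
  rw [Finset.sum_comm (s := t)]

lemma LinearMap.separatingRight_of_span_eq_top {R κ N : Type*} [CommRing R] [AddCommGroup N]
    [Module R N] [DecidableEq κ] {m : κ → N} (hm : Submodule.span R (Set.range m) = ⊤)
    {B : N →ₗ[R] N →ₗ[R] R} (hB : ∀ i j, B (m i) (m j) = if i = j then 1 else 0) :
    B.SeparatingRight := by
  intro y hy
  have hy' : y ∈ Submodule.span R (Set.range m) := hm ▸ Submodule.mem_top
  obtain ⟨c, rfl⟩ := Finsupp.mem_span_range_iff_exists_finsupp.mp hy'
  have hc : c = 0 := by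
    ext i
    simpa [Finsupp.sum, map_sum, hB] using hy (m i)
  simp [hc]

lemma LinearMap.IsAdjointPair.eq_of_separatingRight {R M M₁ M₂ : Type*} [CommRing R]
    [AddCommGroup M] [Module R M] [AddCommGroup M₁] [Module R M₁] [AddCommGroup M₂] [Module R M₂]
    {B : M →ₗ[R] M →ₗ[R] M₂} {B' : M₁ →ₗ[R] M₁ →ₗ[R] M₂} (hB : B.SeparatingRight)
    {f : M → M₁} {g g' : M₁ →ₗ[R] M} (h : IsAdjointPair B B' f g) (h' : IsAdjointPair B B' f g') :
    g = g' := by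
  ext y
  rw [← sub_eq_zero]
  refine hB _ fun x => ?_
  rw [map_sub, ← h, ← h', sub_self]

lemma LinearMap.IsAdjointPair.sum {R M κ : Type*} [CommRing R] [AddCommGroup M] [Module R M]
    {B : M →ₗ[R] M →ₗ[R] R} (t : Finset κ) {f g : κ → Module.End R M}
    (h : ∀ i ∈ t, IsAdjointPair B B (f i) (g i)) :
    IsAdjointPair B B ⇑(∑ i ∈ t, f i) ⇑(∑ i ∈ t, g i) := by
  intro x y
  simp only [LinearMap.sum_apply, map_sum]
  exact Finset.sum_congr rfl fun i hi => h i hi x y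

lemma CliffordAlgebra.contractLeft_mul_mulLeft_ι_add {R M : Type*} [CommRing R] [AddCommGroup M]
    [Module R M] {Q : QuadraticForm R M} (d : Module.Dual R M) (m : M) :
    contractLeft (Q := Q) d * LinearMap.mulLeft R (ι Q m)
      + LinearMap.mulLeft R (ι Q m) * contractLeft d = algebraMap R _ (d m) := by
  ext x
  simp [contractLeft_ι_mul]

section ExteriorMonomial

variable {R M ι : Type*} [CommRing R] [AddCommGroup M] [Module R M] [LinearOrder ι]

def exteriorMonomial (b : Module.Basis ι R M) (S : Finset ι) : ExteriorAlgebra R M :=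
  ((S.sort (· ≤ ·)).map fun t => ExteriorAlgebra.ι R (b t)).prod

variable (b : Module.Basis ι R M)

@[simp]
lemma exteriorMonomial_empty : exteriorMonomial b ∅ = 1 := by
  simp [exteriorMonomial]

lemma exteriorMonomial_insert_of_forall_lt {a : ι} {S : Finset ι} (h : ∀ x ∈ S, a < x) :
    exteriorMonomial b (insert a S) = ExteriorAlgebra.ι R (b a) * exteriorMonomial b S := by
  rw [exteriorMonomial, Finset.sort_insert _ (fun x hx => (h x hx).le)
    (fun ha => lt_irrefl a (h a ha))]
  rfl

lemma exteriorMonomial_singleton (a : ι) :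
    exteriorMonomial b {a} = ExteriorAlgebra.ι R (b a) := by
  rw [← insert_empty_eq, exteriorMonomial_insert_of_forall_lt b (by simp),
    exteriorMonomial_empty, mul_one]

lemma ι_mul_exteriorMonomial (a : ι) (S : Finset ι) :
    ExteriorAlgebra.ι R (b a) * exteriorMonomial b S
      = if a ∈ S then 0
        else (-1 : R) ^ (S.filter (· < a)).card • exteriorMonomial b (insert a S) := by
  induction S using Finset.induction_on_min with
  | empty => simp [exteriorMonomial_singleton]
  | insert x S hx ih =>
    have hxS : x ∉ S := fun h => lt_irrefl x (hx x h)
    rw [exteriorMonomial_insert_of_forall_lt b hx, ← mul_assoc]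
    rcases lt_trichotomy a x with hax | rfl | hxa
    · have haS : a ∉ insert x S := by
        simp only [Finset.mem_insert, not_or]
        exact ⟨hax.ne, fun h => lt_asymm hax (hx a h)⟩
      have hcount : ((insert x S).filter (· < a)).card = 0 := by
        simp only [Finset.card_eq_zero, Finset.filter_eq_empty_iff, Finset.mem_insert, not_lt]
        rintro y (rfl | hy)
        exacts [hax.le, (hax.trans (hx y hy)).le]
      rw [if_neg haS, hcount, pow_zero, one_smul, exteriorMonomial_insert_of_forall_lt b,
        exteriorMonomial_insert_of_forall_lt b hx, mul_assoc]
      simp only [Finset.mem_insert]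
      rintro y (rfl | hy)
      exacts [hax, hax.trans (hx y hy)]
    · rw [ExteriorAlgebra.ι_sq_zero, zero_mul, if_pos (Finset.mem_insert_self _ _)]
    · have hmem : a ∈ insert x S ↔ a ∈ S := by simp [hxa.ne']
      have hcount : ((insert x S).filter (· < a)).card = (S.filter (· < a)).card + 1 := by
        rw [Finset.filter_insert, if_pos hxa, Finset.card_insert_of_notMem (by simp [hxS])]
      have hx' : ∀ y ∈ insert a S, x < y := by
        simp only [Finset.mem_insert]
        rintro y (rfl | hy)
        exacts [hxa, hx y hy]
      rw [eq_neg_of_add_eq_zero_left (ExteriorAlgebra.ι_add_mul_swap _ _), neg_mul, mul_assoc,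
        ih, Finset.insert_comm, exteriorMonomial_insert_of_forall_lt b hx']
      simp only [hmem, hcount]
      split_ifs
      · simp
      · rw [pow_succ, mul_neg_one, neg_smul, mul_smul_comm]

lemma contractLeft_exteriorMonomial (a : ι) (S : Finset ι) :
    CliffordAlgebra.contractLeft (b.coord a) (exteriorMonomial b S)
      = if a ∈ S then (-1 : R) ^ (S.filter (· < a)).card • exteriorMonomial b (S.erase a)
        else 0 := by
  induction S using Finset.induction_on_min with
  | empty => simp
  | insert x S hx ih =>
    have hxS : x ∉ S := fun h => lt_irrefl x (hx x h)
    rw [exteriorMonomial_insert_of_forall_lt b hx, CliffordAlgebra.contractLeft_ι_mul, ih,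
      Module.Basis.coord_apply, Module.Basis.repr_self_apply]
    rcases eq_or_ne x a with rfl | hxa
    · have hcount : ((insert x S).filter (· < x)).card = 0 := by
        simp only [Finset.card_eq_zero, Finset.filter_eq_empty_iff, Finset.mem_insert, not_lt]
        rintro y (rfl | hy)
        exacts [le_rfl, (hx y hy).le]
      simp [hxS, hcount, Finset.erase_insert hxS]
    · by_cases haS : a ∈ S
      · have hcount : ((insert x S).filter (· < a)).card = (S.filter (· < a)).card + 1 := by
          rw [Finset.filter_insert, if_pos (hx a haS), Finset.card_insert_of_notMem (by simp [hxS])]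
        rw [if_neg hxa, if_pos haS, if_pos (Finset.mem_insert_of_mem haS), hcount,
          Finset.erase_insert_of_ne hxa,
          exteriorMonomial_insert_of_forall_lt b (fun y hy => hx y (Finset.mem_of_mem_erase hy)),
          pow_succ, mul_neg_one, neg_smul, mul_smul_comm, zero_smul, zero_sub]
      · simp [hxa, hxa.symm, haS]

lemma span_range_exteriorMonomial :
    Submodule.span R (Set.range (exteriorMonomial b)) = ⊤ := by
  set V := Submodule.span R (Set.range (exteriorMonomial b))
  have hbasis : ∀ (a : ι) {x}, x ∈ V → ExteriorAlgebra.ι R (b a) * x ∈ V := by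
    intro a x hx
    induction hx using Submodule.span_induction with
    | mem y hy =>
      obtain ⟨S, rfl⟩ := hy
      rw [ι_mul_exteriorMonomial]
      split_ifs
      · exact V.zero_mem
      · exact V.smul_mem _ (Submodule.subset_span ⟨_, rfl⟩)
    | zero => simp
    | add y z _ _ hy hz => simpa [mul_add] using V.add_mem hy hz
    | smul c y _ hy => simpa [mul_smul_comm] using V.smul_mem c hy
  have hι : ∀ m {x}, x ∈ V → ExteriorAlgebra.ι R m * x ∈ V := by
    intro m x hx
    have hm : m ∈ Submodule.span R (Set.range b) := b.span_eq ▸ Submodule.mem_top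
    induction hm using Submodule.span_induction with
    | mem y hy =>
      obtain ⟨a, rfl⟩ := hy
      exact hbasis a hx
    | zero => simp
    | add y z _ _ hy hz => simpa [add_mul] using V.add_mem hy hz
    | smul c y _ hy => simpa [smul_mul_assoc] using V.smul_mem c hy
  rw [eq_top_iff]
  rintro x -
  induction x using CliffordAlgebra.left_induction with
  | algebraMap r =>
    rw [Algebra.algebraMap_eq_smul_one, ← exteriorMonomial_empty b]
    exact V.smul_mem _ (Submodule.subset_span ⟨_, rfl⟩)
  | add x y hx hy => exact V.add_mem hx hy
  | ι_mul x m hx => exact hι m hx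

variable {b} in
lemma isAdjointPair_mulLeft_ι_contractLeft
    {B : ExteriorAlgebra R M →ₗ[R] ExteriorAlgebra R M →ₗ[R] R}
    (hB : ∀ S T, B (exteriorMonomial b S) (exteriorMonomial b T) = if S = T then 1 else 0)
    (a : ι) :
    LinearMap.IsAdjointPair B B (LinearMap.mulLeft R (ExteriorAlgebra.ι R (b a)))
      (CliffordAlgebra.contractLeft (b.coord a)) := by
  rw [LinearMap.isAdjointPair_iff_comp_eq_compl₂]
  refine LinearMap.ext_on_range (span_range_exteriorMonomial b) fun S =>
    LinearMap.ext_on_range (span_range_exteriorMonomial b) fun T => ?_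
  simp only [LinearMap.comp_apply, LinearMap.compl₂_apply, LinearMap.mulLeft_apply,
    ι_mul_exteriorMonomial, contractLeft_exteriorMonomial]
  split_ifs with haS haT haT
  · simp only [map_zero, LinearMap.zero_apply, map_smul, hB, smul_eq_mul]
    rw [if_neg (by rintro rfl; simp at haS), mul_zero]
  · simp
  · simp only [map_smul, LinearMap.smul_apply, hB, smul_eq_mul]
    by_cases hT : T = insert a S
    · subst hT
      simp [Finset.erase_insert haS, Finset.filter_insert]
    · rw [if_neg (Ne.symm hT), if_neg fun h => hT (by rw [h, Finset.insert_erase haT]),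
        mul_zero, mul_zero]
  · simp only [map_smul, LinearMap.smul_apply, hB, smul_eq_mul, map_zero]
    rw [if_neg (by rintro rfl; simp at haT), mul_zero]

end ExteriorMonomial

section Flat

variable (n s : ℕ)

def finBasis : Module.Basis (Fin (n + n * s)) ℝ (Vns n s) := (bV n s).reindex (idxEquiv n s)

lemma mono_eq_exteriorMonomial (P : Finset (Idx n s)) :
    mono n s P = exteriorMonomial (finBasis n s) (P.image (idxEquiv n s)) := by
  simp [mono, exteriorMonomial, finBasis]

lemma Eop_eq_mulLeft (a : Idx n s) :
    Eop n s a = LinearMap.mulLeft ℝ (ExteriorAlgebra.ι ℝ (finBasis n s (idxEquiv n s a))) := by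
  simp [Eop, finBasis]

lemma Iop_eq_contractLeft (a : Idx n s) :
    Iop n s a = CliffordAlgebra.contractLeft ((finBasis n s).coord (idxEquiv n s a)) := by
  rw [Iop]
  congr 1
  ext x
  simp [finBasis]

variable {n s}

lemma exteriorMonomial_finBasis_orthonormal {B : Wns n s →ₗ[ℝ] Wns n s →ₗ[ℝ] ℝ}
    (hB : ∀ P Q : Finset (Idx n s), B (mono n s P) (mono n s Q) = if P = Q then 1 else 0)
    (S T : Finset (Fin (n + n * s))) :
    B (exteriorMonomial (finBasis n s) S) (exteriorMonomial (finBasis n s) T)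
      = if S = T then 1 else 0 := by
  have hsurj : ∀ S : Finset (Fin (n + n * s)), ∃ P : Finset (Idx n s),
      P.image (idxEquiv n s) = S := fun S => ⟨S.image (idxEquiv n s).symm, by
    simp [Finset.image_image]⟩
  obtain ⟨P, rfl⟩ := hsurj S
  obtain ⟨Q, rfl⟩ := hsurj T
  rw [← mono_eq_exteriorMonomial, ← mono_eq_exteriorMonomial, hB]
  simp only [Finset.image_inj (idxEquiv n s).injective]

lemma isAdjointPair_Eop_Iop {B : Wns n s →ₗ[ℝ] Wns n s →ₗ[ℝ] ℝ}
    (hB : ∀ P Q : Finset (Idx n s), B (mono n s P) (mono n s Q) = if P = Q then 1 else 0)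
    (a : Idx n s) : LinearMap.IsAdjointPair B B (Eop n s a) (Iop n s a) := by
  rw [Eop_eq_mulLeft, Iop_eq_contractLeft]
  exact isAdjointPair_mulLeft_ι_contractLeft (exteriorMonomial_finBasis_orthonormal hB) _

lemma Iop_mul_Eop_add_Eop_mul_Iop (a c : Idx n s) :
    Iop n s c * Eop n s a + Eop n s a * Iop n s c
      = algebraMap ℝ _ (if a = c then 1 else 0) := by
  rw [Iop, Eop, CliffordAlgebra.contractLeft_mul_mulLeft_ι_add, Module.Basis.coord_apply,
    Module.Basis.repr_self_apply]

lemma Iop_mul_Eop_of_ne {a c : Idx n s} (h : a ≠ c) :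
    Iop n s c * Eop n s a = -(Eop n s a * Iop n s c) :=
  eq_neg_of_add_eq_zero_left (by rw [Iop_mul_Eop_add_Eop_mul_Iop, if_neg h, map_zero])

lemma Lop_eq_sum (k : Fin s) :
    Lop n s k = ∑ i, Eop n s (Sum.inl i) * Eop n s (Sum.inr (i, k)) := by
  ext x
  simp [Lop, Eop, Finset.sum_mul, mul_assoc]

lemma eq_sum_Iop_mul_Iop_of_isAdjointPair {B : Wns n s →ₗ[ℝ] Wns n s →ₗ[ℝ] ℝ}
    (hB : ∀ P Q : Finset (Idx n s), B (mono n s P) (mono n s Q) = if P = Q then 1 else 0)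
    {h : Fin s} {Λ : Wns n s →ₗ[ℝ] Wns n s} (hΛ : LinearMap.IsAdjointPair B B (Lop n s h) Λ) :
    Λ = ∑ j, Iop n s (Sum.inr (j, h)) * Iop n s (Sum.inl j) := by
  have hsep : B.SeparatingRight := LinearMap.separatingRight_of_span_eq_top
    (span_range_exteriorMonomial (finBasis n s)) (exteriorMonomial_finBasis_orthonormal hB)
  refine LinearMap.IsAdjointPair.eq_of_separatingRight hsep hΛ ?_
  rw [Lop_eq_sum]
  exact LinearMap.IsAdjointPair.sum _ fun i _ =>
    (isAdjointPair_Eop_Iop hB _).mul (isAdjointPair_Eop_Iop hB _)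

lemma lcomm_Lop_sum_Iop_mul_Iop {k h : Fin s} (hkh : k ≠ h) :
    lcomm (Lop n s k) (∑ j, Iop n s (Sum.inr (j, h)) * Iop n s (Sum.inl j))
      = ∑ i, Eop n s (Sum.inr (i, k)) ∘ₗ Iop n s (Sum.inr (i, h)) := by
  have hterm : ∀ i j : Fin n,
      lcomm (Eop n s (Sum.inl i) * Eop n s (Sum.inr (i, k)))
        (Iop n s (Sum.inr (j, h)) * Iop n s (Sum.inl j))
        = (if i = j then 1 else 0 : ℝ) • (Eop n s (Sum.inr (i, k)) * Iop n s (Sum.inr (j, h))) :=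
    fun i j => by
      simpa [lcomm_eq_mul_sub_mul] using mul_mul_sub_mul_mul_eq_smul
        (Iop_mul_Eop_of_ne (by simp)) (Iop_mul_Eop_of_ne (by simp [hkh]))
        (Iop_mul_Eop_of_ne (by simp)) (Iop_mul_Eop_add_Eop_mul_Iop (Sum.inl i) (Sum.inl j))
  rw [Lop_eq_sum, lcomm_sum_sum]
  simp only [hterm, ite_smul, one_smul, zero_smul, Finset.sum_ite_eq, Finset.mem_univ, if_true]
  rfl

end Flat

theorem stmt11_general (n s : ℕ)
    (B : Wns n s →ₗ[ℝ] Wns n s →ₗ[ℝ] ℝ)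
    (hBortho : ∀ P Q : Finset (Idx n s),
      B (mono n s P) (mono n s Q) = if P = Q then 1 else 0)
    (Λ : Fin s → (Wns n s →ₗ[ℝ] Wns n s))
    (hΛ : ∀ (k : Fin s) (α β : Wns n s), B (Lop n s k α) β = B α (Λ k β)) :
    ∀ k h : Fin s, k ≠ h →
      lcomm (Lop n s k) (Λ h)
        = ∑ i : Fin n, Eop n s (Sum.inr (i, k)) ∘ₗ Iop n s (Sum.inr (i, h)) := by
  intro k h hkh
  rw [eq_sum_Iop_mul_Iop_of_isAdjointPair hBortho (hΛ h)]
  exact lcomm_Lop_sum_Iop_mul_Iop hkh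

theorem stmt11 (n s : ℕ)
    (B : Wns n s →ₗ[ℝ] Wns n s →ₗ[ℝ] ℝ)
    (hBsymm : ∀ α β, B α β = B β α)
    (hBortho : ∀ P Q : Finset (Idx n s),
      B (mono n s P) (mono n s Q) = if P = Q then 1 else 0)
    (Λ : Fin s → (Wns n s →ₗ[ℝ] Wns n s))
    (hΛ : ∀ (k : Fin s) (α β : Wns n s), B (Lop n s k α) β = B α (Λ k β)) :
    ∀ k h : Fin s, k ≠ h →
      lcomm (Lop n s k) (Λ h)
        = ∑ i : Fin n, Eop n s (Sum.inr (i, k)) ∘ₗ Iop n s (Sum.inr (i, h)) :=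
  stmt11_general n s B hBortho Λ hΛ
end
end
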